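/- Let M be the monoid with presentation ⟨ a, a⁻¹, b, b⁻¹, h | aa⁻¹=a⁻¹a=bb⁻¹=b⁻¹b=1, xh=hx, hxy=hyx (x,y ∈ {a,a⁻¹,b,b⁻¹}), h²a=h²a⁻¹=h²b=h²b⁻¹=h³=h² ⟩. Then every element of M is represented by exactly one word in the set N = F(a,b) ∪ { h b^j a^k : j,k ∈ ℤ } ∪ { h² }, where F(a,b) denotes the set of reduced words of the free group on {a,b}. -/

import Mathlib

/-- The five generating letters `a, a⁻¹, b, b⁻¹, h`. -/
inductive L : Type
  | a | a' | b | b' | h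
deriving DecidableEq

/-- Words over the five letters. -/
abbrev W : Type := FreeMonoid L

/-- The one-letter word. -/
def gen (x : L) : W := FreeMonoid.of x

open L in
/-- The defining relations of the monoid `M`. -/
inductive rel : W → W → Prop
  | inv_aa' : rel (gen a * gen a') 1
  | inv_a'a : rel (gen a' * gen a) 1
  | inv_bb' : rel (gen b * gen b') 1
  | inv_b'b : rel (gen b' * gen b) 1
  | comm (x : L) (hx : x ≠ h) : rel (gen x * gen h) (gen h * gen x)
  | swap (x y : L) (hx : x ≠ h) (hy : y ≠ h) :
      rel (gen h * gen x * gen y) (gen h * gen y * gen x)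
  | zero (x : L) (hx : x ≠ h) : rel (gen h * gen h * gen x) (gen h * gen h)
  | zero_h : rel (gen h * gen h * gen h) (gen h * gen h)

/-- The congruence on the free monoid generated by the defining relations. -/
def Mcon : Con W := conGen rel

/-- The monoid `M` defined by the presentation. -/
abbrev M : Type := Mcon.Quotient

/-- The abelSectionical projection from words to elements of `M`. -/
def π : W →* M := Mcon.mk'

/-- Formal inversion of the letters `a, a⁻¹, b, b⁻¹` (fixing `h`). -/
def invL : L → L
  | L.a => L.a' | L.a' => L.a | L.b => L.b' | L.b' => L.b | L.h => L.h

/-- A word is a reduced word of the free group `F(a,b)` if it involves only the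
letters `a, a⁻¹, b, b⁻¹` and contains no factor `x x⁻¹`. -/
def ReducedAB (w : W) : Prop :=
  (∀ x ∈ FreeMonoid.toList w, x ≠ L.h) ∧
  List.Chain' (fun x y => y ≠ invL x) (FreeMonoid.toList w)

/-- The word `p^k` (for `k ≥ 0`), resp. `q^(-k)` (for `k < 0`), encoding an
integer power of a generator with formal inverse `q`. -/
def zw (p q : L) (k : ℤ) : W :=
  if 0 ≤ k then gen p ^ k.toNat else gen q ^ (-k).toNat

/-- The set of normal forms `𝒩 = F(a,b) ∪ { h b^j a^k : j,k ∈ ℤ } ∪ {h²}`. -/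
def NF : Set W :=
  {w | ReducedAB w} ∪
  {w | ∃ j k : ℤ, w = gen L.h * zw L.b L.b' j * zw L.a L.a' k} ∪
  {gen L.h * gen L.h}

/-!
`M` is isomorphic to the monoid `Model = F(a,b) ⊔ ℤ² ⊔ {0}` in which `F(a,b)` is a group, a
product of two elements of `ℤ²` (or anything with `0`) is `0`, and `F(a,b)` acts on `ℤ²` on both
sides by translation through its abelianization. Sending `a, b` to the generators of `F(a,b)` and
`h` to `(0,0)` respects the relations, giving `M →* Model`. Conversely `g ↦ g`,
`(j,k) ↦ h b^j a^k`, `0 ↦ h²` is a homomorphism `Model →* M`, because the relations make `h²` a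
zero of `M` and make `h g` depend only on the abelianization of `g ∈ F(a,b)`. The two maps are
mutually inverse, and `𝒩` is exactly the set of the evident words spelling the elements of `Model`.
-/

lemma π_eq_of_rel {u v : W} (h : rel u v) : π u = π v :=
  Mcon.eq.mpr (ConGen.Rel.of u v h)

local notation "𝔥" => π (gen L.h)

/-- `true` stands for `a` and `false` for `b`; the first coordinate counts `b`. -/
def abel (g : FreeGroup Bool) : ℤ × ℤ :=
  Multiplicative.toAdd (FreeGroup.lift (fun x => Multiplicative.ofAdd
    (if x then ((0 : ℤ), (1 : ℤ)) else (1, 0))) g)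

@[simp] lemma abel_mul (g g' : FreeGroup Bool) : abel (g * g') = abel g + abel g' := by
  simp [abel]

@[simp] lemma abel_inv (g : FreeGroup Bool) : abel g⁻¹ = -abel g := by
  simp [abel]

@[simp] lemma abel_zpow (g : FreeGroup Bool) (n : ℤ) : abel (g ^ n) = n • abel g := by
  simp [abel]

@[simp] lemma abel_of (x : Bool) : abel (FreeGroup.of x) = if x then (0, 1) else (1, 0) := by
  cases x <;> simp [abel]

@[simp] lemma abel_one : abel 1 = 0 := by simp [abel]

def abelSection (p : ℤ × ℤ) : FreeGroup Bool := FreeGroup.of false ^ p.1 * FreeGroup.of true ^ p.2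

@[simp] lemma abel_abelSection (p : ℤ × ℤ) : abel (abelSection p) = p := by
  simp [abelSection]

inductive Model : Type
  | free : FreeGroup Bool → Model
  | lin : ℤ × ℤ → Model
  | zero : Model

namespace Model

def mul : Model → Model → Model
  | free g, free g' => free (g * g')
  | free g, lin p | lin p, free g => lin (p + abel g)
  | _, _ => zero

instance : Mul Model := ⟨mul⟩
instance : One Model := ⟨free 1⟩

lemma one_def : (1 : Model) = free 1 := rfl

lemma free_mul_free (g g' : FreeGroup Bool) : free g * free g' = free (g * g') := rfl
lemma free_mul_lin (g : FreeGroup Bool) (p : ℤ × ℤ) : free g * lin p = lin (p + abel g) := rfl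
lemma lin_mul_free (p : ℤ × ℤ) (g : FreeGroup Bool) : lin p * free g = lin (p + abel g) := rfl

instance : Monoid Model where
  mul_assoc := by
    rintro (_ | _ | _) (_ | _ | _) (_ | _ | _) <;>
      first | rfl | simp only [free_mul_free, free_mul_lin, lin_mul_free, mul_assoc, abel_mul] <;>
        abel_nf
  one_mul := by rintro (_ | _ | _) <;> first | rfl | simp [one_def, free_mul_free, free_mul_lin]
  mul_one := by rintro (_ | _ | _) <;> first | rfl | simp [one_def, free_mul_free, lin_mul_free]

def ofLetter : L → Model
  | .a => free (FreeGroup.of true)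
  | .a' => free (FreeGroup.of true)⁻¹
  | .b => free (FreeGroup.of false)
  | .b' => free (FreeGroup.of false)⁻¹
  | .h => lin 0

def ofWord : W →* Model := FreeMonoid.lift ofLetter

lemma ofLetter_h : ofLetter L.h = lin 0 := rfl

@[simp] lemma ofWord_gen (x : L) : ofWord (gen x) = ofLetter x := FreeMonoid.lift_eval_of _ x

lemma exists_ofLetter_eq_free {x : L} (hx : x ≠ L.h) : ∃ g, ofLetter x = free g := by
  cases x <;> first | exact absurd rfl hx | exact ⟨_, rfl⟩

lemma ofWord_eq_of_rel {u v : W} (h : rel u v) : ofWord u = ofWord v := by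
  cases h with
  | comm x hx =>
    obtain ⟨g, hg⟩ := exists_ofLetter_eq_free hx
    simp only [map_mul, ofWord_gen, hg]
    rfl
  | swap x y hx hy =>
    obtain ⟨g, hg⟩ := exists_ofLetter_eq_free hx
    obtain ⟨g', hg'⟩ := exists_ofLetter_eq_free hy
    simp only [map_mul, ofWord_gen, hg, hg', ofLetter_h, lin_mul_free, add_right_comm]
  | zero x hx =>
    obtain ⟨g, hg⟩ := exists_ofLetter_eq_free hx
    simp only [map_mul, ofWord_gen, hg]
    rfl
  | _ => first | rfl | simp [ofLetter, free_mul_free, one_def]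

def ofM : M →* Model :=
  Mcon.lift ofWord (Con.conGen_le.mpr fun _ _ h => (Con.ker_rel _).mpr (ofWord_eq_of_rel h))

lemma ofM_π (w : W) : ofM (π w) = ofWord w := rfl

end Model

def unitOfRel {x y : L} (hxy : rel (gen x * gen y) 1) (hyx : rel (gen y * gen x) 1) : Mˣ :=
  ⟨π (gen x), π (gen y), by rw [← map_mul, π_eq_of_rel hxy, map_one],
    by rw [← map_mul, π_eq_of_rel hyx, map_one]⟩

def genUnit : Bool → Mˣ
  | true => unitOfRel rel.inv_aa' rel.inv_a'a
  | false => unitOfRel rel.inv_bb' rel.inv_b'b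

def freeToM : FreeGroup Bool →* M := (Units.coeHom M).comp (FreeGroup.lift genUnit)

@[simp] lemma freeToM_of_true : freeToM (FreeGroup.of true) = π (gen L.a) := rfl
@[simp] lemma freeToM_of_false : freeToM (FreeGroup.of false) = π (gen L.b) := rfl
@[simp] lemma freeToM_inv_of_true : freeToM (FreeGroup.of true)⁻¹ = π (gen L.a') := rfl
@[simp] lemma freeToM_inv_of_false : freeToM (FreeGroup.of false)⁻¹ = π (gen L.b') := rfl

def abSubmonoid : Submonoid M := Submonoid.closure {m | ∃ x ≠ L.h, π (gen x) = m}

lemma freeToM_mem_abSubmonoid (g : FreeGroup Bool) : freeToM g ∈ abSubmonoid := by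
  have gen_mem {x : L} (hx : x ≠ L.h) : π (gen x) ∈ abSubmonoid :=
    Submonoid.subset_closure ⟨x, hx, rfl⟩
  induction g with
  | C1 => simp
  | of x => cases x <;> simpa using gen_mem (by decide)
  | inv_of x _ => cases x <;> simpa using gen_mem (by decide)
  | mul g g' hg hg' => simpa using mul_mem hg hg'

lemma commute_h_of_mem {s : M} (hs : s ∈ abSubmonoid) : Commute s 𝔥 := by
  induction hs using Submonoid.closure_induction with
  | mem _ hm =>
    obtain ⟨x, hx, rfl⟩ := hm
    simpa [Commute, SemiconjBy] using π_eq_of_rel (rel.comm x hx)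
  | one => exact Commute.one_left _
  | mul _ _ _ _ hs ht => exact hs.mul_left ht

lemma h_mul_mul_comm {s t : M} (hs : s ∈ abSubmonoid) (ht : t ∈ abSubmonoid) :
    𝔥 * s * t = 𝔥 * t * s := by
  have mul_left {s₁ s₂ t : M} (hs₁ : s₁ ∈ abSubmonoid) (h₁ : 𝔥 * s₁ * t = 𝔥 * t * s₁)
      (h₂ : 𝔥 * s₂ * t = 𝔥 * t * s₂) : 𝔥 * (s₁ * s₂) * t = 𝔥 * t * (s₁ * s₂) :=
    calc 𝔥 * (s₁ * s₂) * t = s₁ * (𝔥 * s₂ * t) := by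
          rw [← mul_assoc 𝔥, ← (commute_h_of_mem hs₁).eq]; simp only [mul_assoc]
      _ = 𝔥 * s₁ * t * s₂ := by
          rw [h₂, ← (commute_h_of_mem hs₁).eq]; simp only [mul_assoc]
      _ = 𝔥 * t * (s₁ * s₂) := by rw [h₁]; simp only [mul_assoc]
  have gen_left {x : L} (hx : x ≠ L.h) {t : M} (ht : t ∈ abSubmonoid) :
      𝔥 * π (gen x) * t = 𝔥 * t * π (gen x) := by
    induction ht using Submonoid.closure_induction with
    | mem _ hm =>
      obtain ⟨y, hy, rfl⟩ := hm
      simpa using π_eq_of_rel (rel.swap x y hx hy)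
    | one => simp
    | mul t₁ t₂ ht₁ _ h₁ h₂ => exact (mul_left ht₁ h₁.symm h₂.symm).symm
  induction hs using Submonoid.closure_induction with
  | mem _ hm =>
    obtain ⟨x, hx, rfl⟩ := hm
    exact gen_left hx ht
  | one => simp
  | mul s₁ s₂ hs₁ _ h₁ h₂ => exact mul_left hs₁ h₁ h₂

lemma π_surjective : Function.Surjective π := Con.mk'_surjective

lemma h_mul_h_mul_gen (x : L) : 𝔥 * 𝔥 * π (gen x) = 𝔥 * 𝔥 := by
  by_cases hx : x = L.h
  · subst hx; simpa using π_eq_of_rel rel.zero_h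
  · simpa using π_eq_of_rel (rel.zero x hx)

lemma h_mul_h_mul (m : M) : 𝔥 * 𝔥 * m = 𝔥 * 𝔥 := by
  obtain ⟨w, rfl⟩ := π_surjective m
  induction w using FreeMonoid.inductionOn' with
  | one => simp
  | of_mul x w ih => rw [map_mul, ← mul_assoc, ← gen, h_mul_h_mul_gen, ih]

lemma mul_h_mul_h (m : M) : m * (𝔥 * 𝔥) = 𝔥 * 𝔥 := by
  obtain ⟨w, rfl⟩ := π_surjective m
  induction w using FreeMonoid.inductionOn' with
  | one => simp
  | of_mul x w ih =>
    rw [map_mul, mul_assoc, ih, ← gen]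
    by_cases hx : x = L.h
    · subst hx; rw [← mul_assoc, h_mul_h_mul_gen]
    · have hc : Commute (π (gen x)) 𝔥 := commute_h_of_mem (Submonoid.subset_closure ⟨x, hx, rfl⟩)
      rw [← mul_assoc, hc.eq, mul_assoc, hc.eq, ← mul_assoc, h_mul_h_mul_gen]

lemma h_mul_freeToM_mul_comm (g g' : FreeGroup Bool) :
    𝔥 * freeToM (g * g') = 𝔥 * freeToM (g' * g) := by
  simp only [map_mul, ← mul_assoc]
  exact h_mul_mul_comm (freeToM_mem_abSubmonoid g) (freeToM_mem_abSubmonoid g')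

lemma h_mul_freeToM_mul_mul_comm (x y z : FreeGroup Bool) :
    𝔥 * freeToM (x * y * z) = 𝔥 * freeToM (x * z * y) :=
  calc 𝔥 * freeToM (x * y * z) = 𝔥 * freeToM (z * x) * freeToM y := by
        rw [h_mul_freeToM_mul_comm, ← mul_assoc, map_mul, mul_assoc]
    _ = 𝔥 * freeToM (x * z * y) := by
        rw [h_mul_freeToM_mul_comm, mul_assoc, ← map_mul]

lemma h_mul_freeToM_abelSection_add (p q : ℤ × ℤ) :
    𝔥 * freeToM (abelSection (p + q)) = 𝔥 * freeToM (abelSection p * abelSection q) := by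
  have := h_mul_freeToM_mul_mul_comm (FreeGroup.of false ^ p.1) (FreeGroup.of false ^ q.1)
    (FreeGroup.of true ^ p.2)
  simp only [abelSection, Prod.fst_add, Prod.snd_add, zpow_add, map_mul, ← mul_assoc] at this ⊢
  rw [this]

lemma h_mul_freeToM_abelSection_abel (g : FreeGroup Bool) :
    𝔥 * freeToM (abelSection (abel g)) = 𝔥 * freeToM g := by
  induction g with
  | C1 => simp [abelSection]
  | of x => cases x <;> simp [abelSection]
  | inv_of x _ => cases x <;> simp [abelSection]
  | mul g g' ih ih' =>
    calc 𝔥 * freeToM (abelSection (abel (g * g')))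
        = 𝔥 * freeToM (abelSection (abel g)) * freeToM (abelSection (abel g')) := by
          rw [abel_mul, h_mul_freeToM_abelSection_add, map_mul, mul_assoc]
      _ = 𝔥 * freeToM (abelSection (abel g') * g) := by
          rw [ih, mul_assoc, ← map_mul, h_mul_freeToM_mul_comm]
      _ = 𝔥 * freeToM (g * g') := by
          rw [map_mul, ← mul_assoc, ih', mul_assoc, ← map_mul, h_mul_freeToM_mul_comm]

lemma h_mul_freeToM_abelSection_add_abel (p : ℤ × ℤ) (g : FreeGroup Bool) :
    𝔥 * freeToM (abelSection (p + abel g)) = 𝔥 * freeToM (abelSection p) * freeToM g := by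
  have := h_mul_freeToM_abelSection_abel (abelSection p * g)
  rwa [abel_mul, abel_abelSection, map_mul, ← mul_assoc] at this

namespace Model

def toMFun : Model → M
  | free g => freeToM g
  | lin p => 𝔥 * freeToM (abelSection p)
  | zero => 𝔥 * 𝔥

def toM : Model →* M where
  toFun := toMFun
  map_one' := map_one freeToM
  map_mul' := by
    rintro (g | p | _) (g' | q | _)
    · exact map_mul freeToM g g'
    · change 𝔥 * freeToM (abelSection (q + abel g)) = freeToM g * (𝔥 * freeToM (abelSection q))
      rw [h_mul_freeToM_abelSection_add_abel, ← mul_assoc,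
        (commute_h_of_mem (freeToM_mem_abSubmonoid g)).eq,
        h_mul_mul_comm (freeToM_mem_abSubmonoid _) (freeToM_mem_abSubmonoid g)]
    · exact (mul_h_mul_h _).symm
    · exact h_mul_freeToM_abelSection_add_abel p g'
    · change 𝔥 * 𝔥 = 𝔥 * freeToM (abelSection p) * (𝔥 * freeToM (abelSection q))
      rw [← mul_assoc, mul_assoc 𝔥, (commute_h_of_mem (freeToM_mem_abSubmonoid _)).eq,
        ← mul_assoc, mul_assoc (𝔥 * 𝔥), h_mul_h_mul]
    all_goals first | exact (mul_h_mul_h _).symm | exact (h_mul_h_mul _).symm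

lemma toM_free (g : FreeGroup Bool) : toM (free g) = freeToM g := rfl

lemma toM_lin (p : ℤ × ℤ) : toM (lin p) = 𝔥 * freeToM (abelSection p) := rfl

lemma toM_ofLetter (x : L) : toM (ofLetter x) = π (gen x) := by
  cases x <;> simp [ofLetter, toM_free, toM_lin, abelSection]

lemma toM_ofWord (w : W) : toM (ofWord w) = π w :=
  DFunLike.congr_fun (FreeMonoid.hom_eq (f := toM.comp ofWord) (g := π) fun x => toM_ofLetter x) w

lemma toM_ofM (m : M) : toM (ofM m) = m := by
  obtain ⟨w, rfl⟩ := π_surjective m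
  exact toM_ofWord w

end Model

def letter : Bool × Bool → L
  | (true, true) => L.a
  | (true, false) => L.a'
  | (false, true) => L.b
  | (false, false) => L.b'

instance : CanLift L (Bool × Bool) letter (· ≠ L.h) :=
  ⟨fun x hx => by
    cases x
    exacts [⟨(true, true), rfl⟩, ⟨(true, false), rfl⟩, ⟨(false, true), rfl⟩,
      ⟨(false, false), rfl⟩, absurd rfl hx]⟩

lemma reducedAB_ofList_map_letter (l : List (Bool × Bool)) :
    ReducedAB (FreeMonoid.ofList (l.map letter)) ↔ FreeGroup.IsReduced l := by
  have hrel : (fun p q => letter q ≠ invL (letter p)) = fun p q => p.1 = q.1 → p.2 = q.2 := by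
    funext p q; revert p q; decide
  have no_h (p) : letter p ≠ L.h := by revert p; decide
  refine (and_iff_right fun x hx => ?_).trans ?_
  · obtain ⟨p, -, rfl⟩ := List.mem_map.mp hx
    exact no_h p
  exact (List.isChain_map letter).trans (by rw [hrel]; rfl)

lemma ReducedAB.exists_isReduced {w : W} (hw : ReducedAB w) :
    ∃ l : List (Bool × Bool), FreeGroup.IsReduced l ∧ w = FreeMonoid.ofList (l.map letter) := by
  obtain ⟨l, hl⟩ := CanLift.prf (β := List (Bool × Bool)) (FreeMonoid.toList w) hw.1
  refine ⟨l, ?_, by rw [hl]; rfl⟩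
  rw [← reducedAB_ofList_map_letter, hl]
  exact hw

namespace Model

lemma ofLetter_letter (p : Bool × Bool) : ofLetter (letter p) = free (FreeGroup.mk [p]) := by
  rcases p with ⟨_ | _, _ | _⟩ <;> rfl

lemma ofWord_ofList_map_letter (l : List (Bool × Bool)) :
    ofWord (FreeMonoid.ofList (l.map letter)) = free (FreeGroup.mk l) := by
  induction l with
  | nil => rfl
  | cons p l ih =>
    rw [List.map_cons, FreeMonoid.ofList_cons, map_mul, ih, ← gen, ofWord_gen, ofLetter_letter,
      free_mul_free, FreeGroup.mul_mk, List.singleton_append]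

lemma ofWord_zw {p q : L} {g : FreeGroup Bool} (hp : ofLetter p = free g)
    (hq : ofLetter q = free g⁻¹) (k : ℤ) : ofWord (zw p q k) = free (g ^ k) := by
  have free_pow (g : FreeGroup Bool) (n : ℕ) : free g ^ n = free (g ^ n) := by
    induction n with
    | zero => rfl
    | succ n ih => rw [pow_succ, ih, free_mul_free, pow_succ]
  unfold zw
  split_ifs with hk
  · rw [map_pow, ofWord_gen, hp, free_pow, ← zpow_natCast, Int.toNat_of_nonneg hk]
  · rw [map_pow, ofWord_gen, hq, free_pow, inv_pow, ← zpow_natCast, Int.toNat_of_nonneg (by omega),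
      ← zpow_neg, neg_neg]

lemma ofWord_lin_word (j k : ℤ) :
    ofWord (gen L.h * zw L.b L.b' j * zw L.a L.a' k) = lin (j, k) := by
  rw [map_mul, map_mul, ofWord_gen, ofWord_zw rfl rfl, ofWord_zw rfl rfl, ofLetter_h, lin_mul_free,
    lin_mul_free]
  simp

def nf : Model → W
  | free g => FreeMonoid.ofList (g.toWord.map letter)
  | lin p => gen L.h * zw L.b L.b' p.1 * zw L.a L.a' p.2
  | zero => gen L.h * gen L.h

lemma nf_mem_NF (t : Model) : nf t ∈ NF := by
  cases t with
  | free g => exact Or.inl (Or.inl ((reducedAB_ofList_map_letter _).mpr FreeGroup.isReduced_toWord))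
  | lin p => exact Or.inl (Or.inr ⟨p.1, p.2, rfl⟩)
  | zero => exact Or.inr rfl

lemma ofWord_nf (t : Model) : ofWord (nf t) = t := by
  cases t with
  | free g => rw [nf, ofWord_ofList_map_letter, FreeGroup.mk_toWord]
  | lin p => exact ofWord_lin_word p.1 p.2
  | zero => rfl

lemma nf_ofWord {w : W} (hw : w ∈ NF) : nf (ofWord w) = w := by
  rcases hw with (hw | ⟨j, k, rfl⟩) | rfl
  · obtain ⟨l, hl, rfl⟩ := hw.exists_isReduced
    rw [ofWord_ofList_map_letter, nf, FreeGroup.toWord_mk, hl.reduce_eq]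
  · rw [ofWord_lin_word]; rfl
  · rfl

end Model

/-- Every element of `M` is represented by exactly one word in
the set of normal forms `𝒩`. -/
theorem stmt_14 : ∀ m : M, ∃! w : W, w ∈ NF ∧ π w = m := by
  intro m
  refine ⟨Model.nf (Model.ofM m), ⟨Model.nf_mem_NF _, ?_⟩, ?_⟩
  · rw [← Model.toM_ofWord, Model.ofWord_nf, Model.toM_ofM]
  · rintro w ⟨hw, rfl⟩
    rw [Model.ofM_π, Model.nf_ofWord hw]
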